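/- Let π₁, π₂: R ⇉ X be the projection 𝒯-functors of an equivalence relation R ⊆ X×X on the underlying set of X, where R and X are L-separated cocomplete 𝒯-categories and π₁, π₂ are left adjoint 𝒯-functors, and let q: X → Q be the quotient of the underlying equivalence relation in Set, equipped with the 𝒯-category structure c = q·a·Tq° (the coequalizer of π₁, π₂ in Cat 𝒯). Then the diagram π̂₁, π̂₂: R̂ ⇉ X̂, q̂: X̂ → Q̂ is a split fork in Cat_sep 𝒯, split by q^{-1}: Q̂ → X̂ and π₁^{-1}: X̂ → R̂; that is, q̂·q^{-1} = 1_{Q̂}, π̂₁·π₁^{-1} = 1_{X̂}, and q^{-1}·q̂ = π̂₂·π₁^{-1}. -/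

import Mathlib

/-!
The first two identities hold because `q` and `π₁` are split epimorphisms of sets (split by a
choice of representatives and by the diagonal), and `f̂ (f⁻¹ ψ) = ψ` for any such `f`.

For the third, L-separatedness of `X` makes the right adjoint `g` of `π₁` a section of `π₁`, so
`σ = π₂ ∘ g` satisfies `x R σ x` and `a(Tπ₁ 𝔯, x) ≤ a(Tπ₂ 𝔯, σ x)`. Using (BC) for the kernel pair
`R` of `q`, this gives `c(Tq 𝔷, q z) ≤ ⋁_{π₁ w = z} a(𝔷, π₂ w)`, i.e. `q^* · Tq ≤ π₂^* · π₁°`, and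
hence `q⁻¹ q̂ ≤ π̂₂ π₁⁻¹`. The reverse inequality only uses that `q` is a `𝒯`-functor with
`q π₁ = q π₂`.
-/

universe u

namespace Paper

/-- A strict topological theory `𝒯 = (𝕋, V, ξ)`: a commutative unital quantale `V`
(a complete lattice with a commutative monoid structure whose multiplication preserves
suprema in each variable, with `⊥ < k`), a `Set`-monad `𝕋 = (T, e, m)` such that `T`
sends pullbacks to weak pullbacks and the naturality squares of `m` are weak pullbacks,
and a `𝕋`-algebra structure `ξ : T V → V` for which `⊗` and `k` are `𝕋`-algebra
homomorphisms and `ξ_X := ξ ∘ T(-)` is a (monotone) natural transformation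
`P_V → P_V T`. -/
structure TopTheory (V : Type u) [CompleteLattice V] (T : Type u → Type u) where
  tens : V → V → V
  unit : V
  tens_comm : ∀ u v : V, tens u v = tens v u
  tens_assoc : ∀ u v w : V, tens (tens u v) w = tens u (tens v w)
  unit_tens : ∀ v : V, tens unit v = v
  tens_sSup : ∀ (u : V) (S : Set V), tens u (sSup S) = ⨆ v ∈ S, tens u v
  bot_lt_unit : (⊥ : V) < unit
  map : ∀ {X Y : Type u}, (X → Y) → T X → T Y
  map_id : ∀ {X : Type u}, map (id : X → X) = id
  map_comp : ∀ {X Y Z : Type u} (g : Y → Z) (f : X → Y) (𝔵 : T X),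
    map (g ∘ f) 𝔵 = map g (map f 𝔵)
  e : ∀ {X : Type u}, X → T X
  m : ∀ {X : Type u}, T (T X) → T X
  e_nat : ∀ {X Y : Type u} (f : X → Y) (x : X), map f (e x) = e (f x)
  m_nat : ∀ {X Y : Type u} (f : X → Y) (𝔛 : T (T X)), map f (m 𝔛) = m (map (map f) 𝔛)
  m_e : ∀ {X : Type u} (𝔵 : T X), m (e 𝔵) = 𝔵
  m_map_e : ∀ {X : Type u} (𝔵 : T X), m (map e 𝔵) = 𝔵
  m_assoc : ∀ {X : Type u} (𝔜 : T (T (T X))), m (m 𝔜) = m (map m 𝔜)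
  /-- (BC): `T` sends pullbacks to weak pullbacks. -/
  map_bc : ∀ {X Y Z : Type u} (f : X → Z) (g : Y → Z) (𝔵 : T X) (𝔶 : T Y),
    map f 𝔵 = map g 𝔶 →
    ∃ 𝔴 : T {p : X × Y // f p.1 = g p.2},
      map (fun p => p.1.1) 𝔴 = 𝔵 ∧ map (fun p => p.1.2) 𝔴 = 𝔶
  /-- (BC): every naturality square of `m` is a weak pullback. -/
  m_bc : ∀ {X Y : Type u} (f : X → Y) (𝔜 : T (T Y)) (𝔵 : T X),
    m 𝔜 = map f 𝔵 → ∃ 𝔛 : T (T X), map (map f) 𝔛 = 𝔜 ∧ m 𝔛 = 𝔵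
  xi : T V → V
  xi_e : ∀ v : V, xi (e v) = v
  xi_m : ∀ 𝔙 : T (T V), xi (m 𝔙) = xi (map xi 𝔙)
  /-- `k : 1 → V` is a `𝕋`-algebra homomorphism. -/
  xi_unit : ∀ {X : Type u} (𝔵 : T X), xi (map (fun _ => unit) 𝔵) = unit
  /-- `⊗ : V × V → V` is a `𝕋`-algebra homomorphism. -/
  xi_tens : ∀ 𝔴 : T (V × V),
    xi (map (fun p => tens p.1 p.2) 𝔴) = tens (xi (map Prod.fst 𝔴)) (xi (map Prod.snd 𝔴))
  /-- each component `ξ_X : V^X → V^{T X}` is monotone. -/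
  xi_mono : ∀ {X : Type u} (φ φ' : X → V), (∀ x, φ x ≤ φ' x) →
    ∀ 𝔵 : T X, xi (map φ 𝔵) ≤ xi (map φ' 𝔵)
  /-- `ξ_X` is a natural transformation `P_V → P_V T`. -/
  xi_nat : ∀ {X Y : Type u} (f : X → Y) (φ : X → V) (𝔶 : T Y),
    (⨆ 𝔵 : {𝔵 : T X // map f 𝔵 = 𝔶}, xi (map φ 𝔵.1)) =
      xi (map (fun y => ⨆ x : {x : X // f x = y}, φ x.1) 𝔶)

namespace TopTheory

variable {V : Type u} [CompleteLattice V] {T : Type u → Type u}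

/-- The internal hom of the quantale: `u ⊗ (-) ⊣ hom (u, -)`. -/
def ihom (𝒯 : TopTheory V T) (u w : V) : V := sSup {z | 𝒯.tens u z ≤ w}

/-- The extension `T_ξ` of `T : Set → Set` to `V`-relations. -/
def Txi (𝒯 : TopTheory V T) {X Y : Type u} (r : X → Y → V) (𝔵 : T X) (𝔶 : T Y) : V :=
  ⨆ 𝔴 : {w : T (X × Y) // 𝒯.map Prod.fst w = 𝔵 ∧ 𝒯.map Prod.snd w = 𝔶},
    𝒯.xi (𝒯.map (fun p => r p.1 p.2) 𝔴.1)

/-- Kleisli convolution `β ∘ α = β · T_ξ α · m_X°` of `𝒯`-relations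
`α : X ⇸ Y` and `β : Y ⇸ Z`. -/
def kleisli (𝒯 : TopTheory V T) {X Y Z : Type u}
    (β : T Y → Z → V) (α : T X → Y → V) (𝔵 : T X) (z : Z) : V :=
  ⨆ 𝔛 : {𝔛 : T (T X) // 𝒯.m 𝔛 = 𝔵}, ⨆ 𝔶 : T Y, 𝒯.tens (𝒯.Txi α 𝔛.1 𝔶) (β 𝔶 z)

/-- The `𝒯`-relation `e_X° : X ⇸ X`. -/
def unitRel (𝒯 : TopTheory V T) (X : Type u) (𝔵 : T X) (x : X) : V :=
  ⨆ _ : 𝔵 = 𝒯.e x, 𝒯.unit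

/-- A `𝒯`-category structure on `X`: a `𝒯`-relation `a : X ⇸ X` with
`e_X° ≤ a` and `a ∘ a ≤ a`. -/
structure TCatStr (𝒯 : TopTheory V T) (X : Type u) where
  rel : T X → X → V
  le_refl : ∀ x : X, 𝒯.unit ≤ rel (𝒯.e x) x
  comp : ∀ (𝔵 : T X) (x : X), 𝒯.kleisli rel rel 𝔵 x ≤ rel 𝔵 x

/-- The `𝒯`-module conditions `φ ∘ a ≤ φ` and `b ∘ φ ≤ φ` for a `𝒯`-relation
`φ : X ⇸ Y` between (structures underlying) `𝒯`-categories `(X,a)` and `(Y,b)`. -/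
def IsTModRel (𝒯 : TopTheory V T) {X Y : Type u}
    (a : T X → X → V) (b : T Y → Y → V) (φ : T X → Y → V) : Prop :=
  (∀ 𝔵 y, 𝒯.kleisli φ a 𝔵 y ≤ φ 𝔵 y) ∧ (∀ 𝔵 y, 𝒯.kleisli b φ 𝔵 y ≤ φ 𝔵 y)

variable {𝒯 : TopTheory V T}

/-- `f_* = b · T f`. -/
def modStar {X Y : Type u} (b : 𝒯.TCatStr Y) (f : X → Y) (𝔵 : T X) (y : Y) : V :=
  b.rel (𝒯.map f 𝔵) y

/-- `f^* = f° · b`. -/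
def modCostar {X Y : Type u} (b : 𝒯.TCatStr Y) (f : X → Y) (𝔶 : T Y) (x : X) : V :=
  b.rel 𝔶 (f x)

/-- The extension `φ ⟜ ψ` of `φ : X ⇸∘ Y` along `ψ : X ⇸∘ Z`, given by
`(φ ⟜ ψ)(𝔷,y) = ⋀_{𝔵 ∈ T X} hom((T_ξ ψ · m_X°)(𝔵,𝔷), φ(𝔵,y))`. -/
def extend (𝒯 : TopTheory V T) {X Y Z : Type u}
    (φ : T X → Y → V) (ψ : T X → Z → V) (𝔷 : T Z) (y : Y) : V :=
  ⨅ 𝔵 : T X, 𝒯.ihom (⨆ 𝔛 : {𝔛 : T (T X) // 𝒯.m 𝔛 = 𝔵}, 𝒯.Txi ψ 𝔛.1 𝔷) (φ 𝔵 y)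

/-- A `𝒯`-functor `f : (X,a) → (Y,b)`. -/
def IsTFunctor {X Y : Type u} (a : 𝒯.TCatStr X) (b : 𝒯.TCatStr Y) (f : X → Y) : Prop :=
  ∀ (𝔵 : T X) (x : X), a.rel 𝔵 x ≤ b.rel (𝒯.map f 𝔵) (f x)

/-- A fully faithful `𝒯`-functor. -/
def FullyFaithful {X Y : Type u} (a : 𝒯.TCatStr X) (b : 𝒯.TCatStr Y) (f : X → Y) : Prop :=
  ∀ (𝔵 : T X) (x : X), a.rel 𝔵 x = b.rel (𝒯.map f 𝔵) (f x)

/-- The order `f ≤ g ⟺ f^* ≤ g^*` on `𝒯`-functors `X → (Y,b)`. -/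
def funLE {X Y : Type u} (b : 𝒯.TCatStr Y) (f g : X → Y) : Prop :=
  ∀ (𝔶 : T Y) (x : X), b.rel 𝔶 (f x) ≤ b.rel 𝔶 (g x)

/-- Equivalence `f ≅ g ⟺ f^* = g^*` of `𝒯`-functors `X → (Y,b)`. -/
def FunEquiv {X Y : Type u} (b : 𝒯.TCatStr Y) (f g : X → Y) : Prop :=
  ∀ (𝔶 : T Y) (x : X), b.rel 𝔶 (f x) = b.rel 𝔶 (g x)

/-- `f ⊣ g`:  `1_X ≤ g·f` and `f·g ≤ 1_Y`. -/
def IsAdjunction {X Y : Type u} (a : 𝒯.TCatStr X) (b : 𝒯.TCatStr Y)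
    (f : X → Y) (g : Y → X) : Prop :=
  (∀ (𝔵 : T X) (x : X), a.rel 𝔵 x ≤ a.rel 𝔵 (g (f x))) ∧
    (∀ (𝔶 : T Y) (y : Y), b.rel 𝔶 (f (g y)) ≤ b.rel 𝔶 y)

/-- A left adjoint `𝒯`-functor. -/
def IsLeftAdjoint {X Y : Type u} (a : 𝒯.TCatStr X) (b : 𝒯.TCatStr Y) (f : X → Y) : Prop :=
  IsTFunctor a b f ∧ ∃ g : Y → X, IsTFunctor b a g ∧ IsAdjunction a b f g

/-- L-separatedness: equivalent `𝒯`-functors into `X` are equal. -/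
def Separated {X : Type u} (a : 𝒯.TCatStr X) : Prop :=
  ∀ (A : Type u) (as : 𝒯.TCatStr A) (f g : A → X),
    IsTFunctor as a f → IsTFunctor as a g → FunEquiv a f g → f = g

/-- Injectivity with respect to fully faithful `𝒯`-functors. -/
def Injective {X : Type u} (a : 𝒯.TCatStr X) : Prop :=
  ∀ (A B : Type u) (as : 𝒯.TCatStr A) (bs : 𝒯.TCatStr B) (f : A → X) (i : A → B),
    IsTFunctor as a f → IsTFunctor as bs i → FullyFaithful as bs i →
      ∃ g : B → X, IsTFunctor bs a g ∧ FunEquiv a (g ∘ i) f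

/-- `g : Z → X` is the `ψ`-weighted colimit of `h : A → X`, i.e. `g_* = h_* ⟜ ψ`. -/
def IsColimit {X A Z : Type u} (a : 𝒯.TCatStr X) (h : A → X) (ψ : T A → Z → V)
    (g : Z → X) : Prop :=
  ∀ (𝔷 : T Z) (x : X), modStar a g 𝔷 x = 𝒯.extend (modStar a h) ψ 𝔷 x

/-- Cocompleteness: every weighted diagram has a colimit. -/
def Cocomplete {X : Type u} (a : 𝒯.TCatStr X) : Prop :=
  ∀ (A Z : Type u) (as : 𝒯.TCatStr A) (cs : 𝒯.TCatStr Z) (h : A → X),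
    IsTFunctor as a h → ∀ ψ : T A → Z → V, 𝒯.IsTModRel as.rel cs.rel ψ →
      ∃ g : Z → X, IsTFunctor cs a g ∧ IsColimit a h ψ g

/-- Cocontinuity: preservation of all weighted colimits. -/
def Cocontinuous {X Y : Type u} (a : 𝒯.TCatStr X) (b : 𝒯.TCatStr Y) (f : X → Y) : Prop :=
  ∀ (A Z : Type u) (as : 𝒯.TCatStr A) (cs : 𝒯.TCatStr Z) (h : A → X)
    (ψ : T A → Z → V) (g : Z → X),
    IsTFunctor as a h → 𝒯.IsTModRel as.rel cs.rel ψ → IsTFunctor cs a g →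
      IsColimit a h ψ g → IsColimit b (f ∘ h) ψ (f ∘ g)

/-- A presheaf on `(X,a)`: a `𝒯`-module `X ⇸∘ G`, where `G = (1, e_1°)`. -/
def IsPresheaf {X : Type u} (a : 𝒯.TCatStr X) (ψ : T X → V) : Prop :=
  𝒯.IsTModRel a.rel (𝒯.unitRel PUnit) (fun 𝔵 _ => ψ 𝔵)

/-- The underlying set of the presheaf `𝒯`-category `X̂`. -/
def Hat {X : Type u} (a : 𝒯.TCatStr X) : Type u := {ψ : T X → V // IsPresheaf a ψ}

/-- The `𝒯`-category structure `⟦-,-⟧` of `V^{|X|}`. -/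
def powRel (𝒯 : TopTheory V T) (X : Type u) (𝔭 : T (T X → V)) (ψ : T X → V) : V :=
  ⨅ 𝔮 : {q : T ((T X) × (T X → V)) // 𝒯.map Prod.snd q = 𝔭},
    𝒯.ihom (𝒯.xi (𝒯.map (fun p => p.2 p.1) 𝔮.1)) (ψ (𝒯.m (𝒯.map Prod.fst 𝔮.1)))

/-- `hs` is the `𝒯`-category structure on `X̂` inherited from `V^{|X|}`. -/
def IsHatStr {X : Type u} (a : 𝒯.TCatStr X) (hs : 𝒯.TCatStr (Hat a)) : Prop :=
  ∀ (𝔭 : T (Hat a)) (ψ : Hat a), hs.rel 𝔭 ψ = 𝒯.powRel X (𝒯.map Subtype.val 𝔭) ψ.1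

/-- `y` is the Yoneda functor `X → X̂`, `y x = a(-,x)`. -/
def IsYoneda {X : Type u} (a : 𝒯.TCatStr X) (y : X → Hat a) : Prop :=
  ∀ (x : X) (𝔵 : T X), (y x).1 𝔵 = a.rel 𝔵 x

/-- The underlying map `ψ ↦ ψ ∘ f^*` of `f̂ : X̂ → Ŷ`. -/
def hatMapRel {X Y : Type u} (b : 𝒯.TCatStr Y) (f : X → Y) (ψ : T X → V) (𝔶 : T Y) : V :=
  𝒯.kleisli (fun 𝔵 (_ : PUnit.{u + 1}) => ψ 𝔵) (modCostar b f) 𝔶 PUnit.unit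

/-- `fh` is the `𝒯`-functor `f̂ : X̂ → Ŷ`, with underlying map `ψ ↦ ψ ∘ f^*`. -/
def IsHatMap {X Y : Type u} (a : 𝒯.TCatStr X) (b : 𝒯.TCatStr Y) (f : X → Y)
    (fh : Hat a → Hat b) : Prop :=
  ∀ (ψ : Hat a) (𝔶 : T Y), (fh ψ).1 𝔶 = hatMapRel b f ψ.1 𝔶

/-- An inhabited `𝒯`-module: `k ≤ ⋀_y ⋁_𝔵 φ(𝔵,y)`. -/
def InhabitedMod (𝒯 : TopTheory V T) {X Y : Type u} (φ : T X → Y → V) : Prop :=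
  𝒯.unit ≤ ⨅ y : Y, ⨆ 𝔵 : T X, φ 𝔵 y

/-- A dense `𝒯`-functor: `f_*` is inhabited. -/
def Dense {X Y : Type u} (b : 𝒯.TCatStr Y) (f : X → Y) : Prop :=
  𝒯.InhabitedMod (modStar b f)

/-- The underlying set of `X⁺ = {ψ ∈ X̂ ∣ ψ inhabited}`. -/
def Plus {X : Type u} (a : 𝒯.TCatStr X) : Type u :=
  {ψ : Hat a // 𝒯.InhabitedMod (fun 𝔵 (_ : PUnit.{u + 1}) => ψ.1 𝔵)}

/-- `ps` is the `𝒯`-category structure on `X⁺` inherited from `X̂`. -/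
def IsPlusStr {X : Type u} (a : 𝒯.TCatStr X) (hs : 𝒯.TCatStr (Hat a))
    (ps : 𝒯.TCatStr (Plus a)) : Prop :=
  ∀ (𝔭 : T (Plus a)) (ψ : Plus a), ps.rel 𝔭 ψ = hs.rel (𝒯.map Subtype.val 𝔭) ψ.1

/-- Inhabited-cocompleteness: all colimits with inhabited weights exist. -/
def ICocomplete {X : Type u} (a : 𝒯.TCatStr X) : Prop :=
  ∀ (A Z : Type u) (as : 𝒯.TCatStr A) (cs : 𝒯.TCatStr Z) (h : A → X),
    IsTFunctor as a h → ∀ ψ : T A → Z → V, 𝒯.IsTModRel as.rel cs.rel ψ →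
      𝒯.InhabitedMod ψ → ∃ g : Z → X, IsTFunctor cs a g ∧ IsColimit a h ψ g

/-- Inhabited-cocontinuity: preservation of all colimits with inhabited weights. -/
def ICocontinuous {X Y : Type u} (a : 𝒯.TCatStr X) (b : 𝒯.TCatStr Y) (f : X → Y) : Prop :=
  ∀ (A Z : Type u) (as : 𝒯.TCatStr A) (cs : 𝒯.TCatStr Z) (h : A → X)
    (ψ : T A → Z → V) (g : Z → X),
    IsTFunctor as a h → 𝒯.IsTModRel as.rel cs.rel ψ → 𝒯.InhabitedMod ψ →
      IsTFunctor cs a g → IsColimit a h ψ g → IsColimit b (f ∘ h) ψ (f ∘ g)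

section Quantale

variable (𝒯)

lemma tens_mono_right (u : V) : Monotone (𝒯.tens u) := fun v w h =>
  calc 𝒯.tens u v ≤ ⨆ x ∈ ({v, w} : Set V), 𝒯.tens u x := le_biSup _ (by simp)
    _ = 𝒯.tens u w := by rw [← 𝒯.tens_sSup, sSup_pair, sup_eq_right.mpr h]

lemma tens_le_tens {u u' v v' : V} (hu : u ≤ u') (hv : v ≤ v') :
    𝒯.tens u v ≤ 𝒯.tens u' v' :=
  calc 𝒯.tens u v ≤ 𝒯.tens u v' := 𝒯.tens_mono_right u hv
    _ = 𝒯.tens v' u := 𝒯.tens_comm _ _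
    _ ≤ 𝒯.tens v' u' := 𝒯.tens_mono_right v' hu
    _ = 𝒯.tens u' v' := 𝒯.tens_comm _ _

lemma tens_unit (v : V) : 𝒯.tens v 𝒯.unit = v := by
  rw [𝒯.tens_comm, 𝒯.unit_tens]

lemma iSup_tens {ι : Sort*} (f : ι → V) (c : V) :
    𝒯.tens (⨆ i, f i) c = ⨆ i, 𝒯.tens (f i) c := by
  rw [𝒯.tens_comm, iSup, 𝒯.tens_sSup, iSup_range]
  exact iSup_congr fun i => 𝒯.tens_comm _ _

end Quantale

section Relations

variable (𝒯)

lemma le_Txi {X Y Z : Type u} (r : X → Y → V) {𝔵 : T X} {𝔶 : T Y} (g : Z → X × Y) (𝔷 : T Z)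
    (h₁ : 𝒯.map (fun z => (g z).1) 𝔷 = 𝔵) (h₂ : 𝒯.map (fun z => (g z).2) 𝔷 = 𝔶) :
    𝒯.xi (𝒯.map (fun z => r (g z).1 (g z).2) 𝔷) ≤ 𝒯.Txi r 𝔵 𝔶 :=
  le_iSup_of_le ⟨𝒯.map g 𝔷, (𝒯.map_comp _ _ _).symm.trans h₁, (𝒯.map_comp _ _ _).symm.trans h₂⟩
    (by rw [← 𝒯.map_comp]; rfl)

lemma le_Txi_e {X Y : Type u} (r : X → Y → V) (x : X) (y : Y) :
    r x y ≤ 𝒯.Txi r (𝒯.e x) (𝒯.e y) := by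
  have h := 𝒯.le_Txi r id (𝒯.e (x, y)) (𝒯.e_nat _ _) (𝒯.e_nat _ _)
  rwa [𝒯.e_nat, 𝒯.xi_e] at h

lemma unit_le_Txi_map {X Y Z : Type u} (r : X → Y → V) (f : Z → X) (g : Z → Y)
    (h : ∀ z, 𝒯.unit ≤ r (f z) (g z)) (𝔷 : T Z) :
    𝒯.unit ≤ 𝒯.Txi r (𝒯.map f 𝔷) (𝒯.map g 𝔷) :=
  calc 𝒯.unit = 𝒯.xi (𝒯.map (fun _ => 𝒯.unit) 𝔷) := (𝒯.xi_unit 𝔷).symm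
    _ ≤ 𝒯.xi (𝒯.map (fun z => r (f z) (g z)) 𝔷) := 𝒯.xi_mono _ _ h 𝔷
    _ ≤ _ := 𝒯.le_Txi r (fun z => (f z, g z)) 𝔷 rfl rfl

lemma Txi_mono {X Y : Type u} {r r' : X → Y → V} (h : ∀ x y, r x y ≤ r' x y)
    (𝔵 : T X) (𝔶 : T Y) : 𝒯.Txi r 𝔵 𝔶 ≤ 𝒯.Txi r' 𝔵 𝔶 :=
  iSup_mono fun 𝔴 => 𝒯.xi_mono _ _ (fun p => h p.1 p.2) 𝔴.1

lemma Txi_comp_le_Txi_map {X Y X' Y' : Type u} (s : X' → Y' → V) (f : X → X') (g : Y → Y')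
    (𝔵 : T X) (𝔶 : T Y) :
    𝒯.Txi (fun x y => s (f x) (g y)) 𝔵 𝔶 ≤ 𝒯.Txi s (𝒯.map f 𝔵) (𝒯.map g 𝔶) :=
  iSup_le fun 𝔴 => 𝒯.le_Txi s (Prod.map f g) 𝔴.1
    ((𝒯.map_comp f Prod.fst 𝔴.1).trans (congrArg _ 𝔴.2.1))
    ((𝒯.map_comp g Prod.snd 𝔴.1).trans (congrArg _ 𝔴.2.2))

lemma Txi_map_le_Txi_comp {A B Z : Type u} (s : B → Z → V) (f : A → B) (𝔞 : T A) (𝔷 : T Z) :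
    𝒯.Txi s (𝒯.map f 𝔞) 𝔷 ≤ 𝒯.Txi (fun α z => s (f α) z) 𝔞 𝔷 := by
  refine iSup_le fun 𝔴 => ?_
  obtain ⟨𝔭, h𝔭₁, h𝔭₂⟩ := 𝒯.map_bc Prod.fst f 𝔴.1 𝔞 𝔴.2.1
  have hs : 𝒯.map (fun p : B × Z => s p.1 p.2) 𝔴.1 =
      𝒯.map (fun c : {p : (B × Z) × A // p.1.1 = f p.2} => s (f c.1.2) c.1.1.2) 𝔭 := by
    rw [← h𝔭₁, ← 𝒯.map_comp]
    congr 1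
    funext c
    exact congrArg (s · c.1.1.2) c.2
  rw [hs]
  refine 𝒯.le_Txi (fun α z => s (f α) z) (fun c => (c.1.2, c.1.1.2)) 𝔭 h𝔭₂ ?_
  rw [← 𝔴.2.2, ← h𝔭₁, ← 𝒯.map_comp]
  rfl

lemma Txi_iSup_fiber_le {A W Z : Type u} (t : A → W → V) (π : W → Z) (𝔞 : T A) (𝔷 : T Z) :
    𝒯.Txi (fun α z => ⨆ w : {w // π w = z}, t α w.1) 𝔞 𝔷 ≤
      ⨆ 𝔴 : {𝔴 // 𝒯.map π 𝔴 = 𝔷}, 𝒯.Txi t 𝔞 𝔴.1 := by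
  refine iSup_le fun 𝔭 => ?_
  have hfib : ∀ p : A × Z, (⨆ w : {w // π w = p.2}, t p.1 w.1) =
      ⨆ c : {c : A × W // Prod.map id π c = p}, t c.1.1 c.1.2 := by
    intro p
    apply le_antisymm
    · exact iSup_le fun w => le_iSup_of_le ⟨(p.1, w.1), Prod.ext rfl w.2⟩ le_rfl
    · refine iSup_le fun ⟨⟨α, w⟩, hc⟩ => ?_
      cases hc
      exact le_iSup_of_le ⟨w, rfl⟩ le_rfl
  have hnat := 𝒯.xi_nat (Prod.map id π) (fun c : A × W => t c.1 c.2) 𝔭.1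
  rw [show (fun p : A × Z => ⨆ w : {w // π w = p.2}, t p.1 w.1) = _ from funext hfib, ← hnat]
  refine iSup_le fun ℭ => le_iSup_of_le ⟨𝒯.map Prod.snd ℭ.1, ?_⟩ (𝒯.le_Txi t id ℭ.1 ?_ rfl)
  · exact (𝒯.map_comp π Prod.snd ℭ.1).symm.trans
      ((𝒯.map_comp Prod.snd (Prod.map id π) ℭ.1).trans ((congrArg _ ℭ.2).trans 𝔭.2.2))
  · exact (𝒯.map_comp Prod.fst (Prod.map id π) ℭ.1).trans ((congrArg _ ℭ.2).trans 𝔭.2.1)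

lemma le_kleisli {X Y Z : Type u} (β : T Y → Z → V) (α : T X → Y → V) {𝔵 : T X} {z : Z}
    (𝔛 : T (T X)) (h𝔛 : 𝒯.m 𝔛 = 𝔵) (𝔶 : T Y) :
    𝒯.tens (𝒯.Txi α 𝔛 𝔶) (β 𝔶 z) ≤ 𝒯.kleisli β α 𝔵 z :=
  le_iSup_of_le ⟨𝔛, h𝔛⟩ (le_iSup_of_le 𝔶 le_rfl)

lemma kleisli_le {X Y Z : Type u} (β : T Y → Z → V) (α : T X → Y → V) {𝔵 : T X} {z : Z} {c : V}
    (h : ∀ (𝔛 : {𝔛 : T (T X) // 𝒯.m 𝔛 = 𝔵}) (𝔶 : T Y), 𝒯.tens (𝒯.Txi α 𝔛.1 𝔶) (β 𝔶 z) ≤ c) :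
    𝒯.kleisli β α 𝔵 z ≤ c :=
  iSup₂_le h

end Relations

namespace TCatStr

variable {X : Type u} (a : 𝒯.TCatStr X)

lemma rel_le_rel_of_unit_le {x y : X} (h : 𝒯.unit ≤ a.rel (𝒯.e x) y) (𝔵 : T X) :
    a.rel 𝔵 x ≤ a.rel 𝔵 y :=
  calc a.rel 𝔵 x = 𝒯.tens (a.rel 𝔵 x) 𝒯.unit := (𝒯.tens_unit _).symm
    _ ≤ 𝒯.tens (𝒯.Txi a.rel (𝒯.e 𝔵) (𝒯.e x)) (a.rel (𝒯.e x) y) :=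
      𝒯.tens_le_tens (𝒯.le_Txi_e a.rel 𝔵 x) h
    _ ≤ 𝒯.kleisli a.rel a.rel 𝔵 y := 𝒯.le_kleisli _ _ _ (𝒯.m_e 𝔵) _
    _ ≤ a.rel 𝔵 y := a.comp 𝔵 y

lemma rel_map_le (h : X → X) (hh : ∀ x, 𝒯.unit ≤ a.rel (𝒯.e x) (h x)) (𝔵 : T X) (x : X) :
    a.rel (𝒯.map h 𝔵) x ≤ a.rel 𝔵 x :=
  calc a.rel (𝒯.map h 𝔵) x = 𝒯.tens 𝒯.unit (a.rel (𝒯.map h 𝔵) x) := (𝒯.unit_tens _).symm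
    _ ≤ 𝒯.tens (𝒯.Txi a.rel (𝒯.map 𝒯.e 𝔵) (𝒯.map h 𝔵)) (a.rel (𝒯.map h 𝔵) x) :=
      𝒯.tens_le_tens (𝒯.unit_le_Txi_map a.rel 𝒯.e h hh 𝔵) le_rfl
    _ ≤ 𝒯.kleisli a.rel a.rel 𝔵 x := 𝒯.le_kleisli _ _ _ (𝒯.m_map_e 𝔵) _
    _ ≤ a.rel 𝔵 x := a.comp 𝔵 x

end TCatStr

section Adjunction

variable {A X Y : Type u} {α : 𝒯.TCatStr A} {a : 𝒯.TCatStr X} {f : A → X} {g : X → A}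

lemma IsAdjunction.leftInverse (hfg : IsAdjunction α a f g) (hf : IsTFunctor α a f)
    (hg : IsTFunctor a α g) (ha : Separated a) {s : X → A} (hs : Function.RightInverse s f) :
    Function.LeftInverse f g := by
  have hfg_functor : IsTFunctor a a (f ∘ g) := fun 𝔵 x =>
    (hg 𝔵 x).trans ((hf _ _).trans_eq (by rw [𝒯.map_comp]; rfl))
  have hid : IsTFunctor a a id := fun 𝔵 x => by rw [𝒯.map_id]; rfl
  have hunit : ∀ x, 𝒯.unit ≤ a.rel (𝒯.e x) (f (g x)) := fun x =>
    calc 𝒯.unit ≤ α.rel (𝒯.e (s x)) (s x) := α.le_refl _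
      _ ≤ α.rel (𝒯.e (s x)) (g (f (s x))) := hfg.1 _ _
      _ ≤ a.rel (𝒯.map f (𝒯.e (s x))) (f (g (f (s x)))) := hf _ _
      _ = a.rel (𝒯.e x) (f (g x)) := by rw [𝒯.e_nat, hs x]
  have hequiv : FunEquiv a (f ∘ g) id := fun 𝔵 x =>
    le_antisymm (hfg.2 𝔵 x) (a.rel_le_rel_of_unit_le (hunit x) 𝔵)
  exact congrFun (ha X a _ _ hfg_functor hid hequiv)

lemma IsAdjunction.rel_map_le_rel_map (hfg : IsAdjunction α a f g) (hg : IsTFunctor a α g)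
    {c : 𝒯.TCatStr Y} {h : A → Y} (hh : IsTFunctor α c h) (𝔞 : T A) (x : X) :
    a.rel (𝒯.map f 𝔞) x ≤ c.rel (𝒯.map h 𝔞) (h (g x)) :=
  calc a.rel (𝒯.map f 𝔞) x ≤ α.rel (𝒯.map g (𝒯.map f 𝔞)) (g x) := hg _ _
    _ = α.rel (𝒯.map (g ∘ f) 𝔞) (g x) := by rw [𝒯.map_comp]
    _ ≤ α.rel 𝔞 (g x) := α.rel_map_le _ (fun p => (α.le_refl p).trans (hfg.1 _ p)) 𝔞 _
    _ ≤ c.rel (𝒯.map h 𝔞) (h (g x)) := hh _ _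

end Adjunction

lemma hatMapRel_comap_of_rightInverse {A Y : Type u} (b : 𝒯.TCatStr Y) {f : A → Y} {s : Y → A}
    (hs : Function.RightInverse s f) {ψ : T Y → V} (hψ : IsPresheaf b ψ) (𝔶 : T Y) :
    hatMapRel b f (fun 𝔞 => ψ (𝒯.map f 𝔞)) 𝔶 = ψ 𝔶 := by
  apply le_antisymm
  · refine 𝒯.kleisli_le _ _ fun 𝔜 𝔞 => le_trans ?_ (hψ.1 𝔶 PUnit.unit)
    have hTxi := 𝒯.Txi_comp_le_Txi_map b.rel id f 𝔜.1 𝔞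
    rw [𝒯.map_id] at hTxi
    exact (𝒯.tens_le_tens hTxi le_rfl).trans
      (𝒯.le_kleisli (fun 𝔵 (_ : PUnit.{u + 1}) => ψ 𝔵) b.rel _ 𝔜.2 _)
  · have hfs : 𝒯.map f (𝒯.map s 𝔶) = 𝔶 := by
      rw [← 𝒯.map_comp, show f ∘ s = id from funext hs, 𝒯.map_id]
      rfl
    calc ψ 𝔶 = 𝒯.tens 𝒯.unit (ψ (𝒯.map f (𝒯.map s 𝔶))) := by rw [hfs, 𝒯.unit_tens]
      _ ≤ 𝒯.tens (𝒯.Txi (modCostar b f) (𝒯.map 𝒯.e 𝔶) (𝒯.map s 𝔶)) (ψ (𝒯.map f (𝒯.map s 𝔶))) :=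
        𝒯.tens_le_tens (𝒯.unit_le_Txi_map _ _ _
          (fun y => (b.le_refl y).trans_eq (by rw [modCostar, hs y])) 𝔶) le_rfl
      _ ≤ _ := 𝒯.le_kleisli (fun 𝔞 (_ : PUnit.{u + 1}) => ψ (𝒯.map f 𝔞)) _ _ (𝒯.m_map_e 𝔶) _

lemma hatMapRel_comap_le_hatMapRel_map {W X Q : Type u} {a : 𝒯.TCatStr X} {c : 𝒯.TCatStr Q}
    {q : X → Q} (hq : IsTFunctor a c q) {p₁ p₂ : W → X} (hp : ∀ w, q (p₁ w) = q (p₂ w))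
    (ψ : T X → V) (𝔵 : T X) :
    hatMapRel a p₂ (fun 𝔴 => ψ (𝒯.map p₁ 𝔴)) 𝔵 ≤ hatMapRel c q ψ (𝒯.map q 𝔵) := by
  refine 𝒯.kleisli_le _ _ fun 𝔛 𝔴 => ?_
  have hm : 𝒯.m (𝒯.map (𝒯.map q) 𝔛.1) = 𝒯.map q 𝔵 := by rw [← 𝒯.m_nat, 𝔛.2]
  refine le_trans (𝒯.tens_le_tens ?_ le_rfl)
    (𝒯.le_kleisli (fun 𝔵 (_ : PUnit.{u + 1}) => ψ 𝔵) _ _ hm (𝒯.map p₁ 𝔴))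
  refine le_trans (𝒯.Txi_mono (fun 𝔷 w => ?_) _ _)
    (𝒯.Txi_comp_le_Txi_map (modCostar c q) (𝒯.map q) p₁ 𝔛.1 𝔴)
  exact (hq 𝔷 (p₂ w)).trans_eq (by rw [modCostar, hp w])

section Quotient

variable {X : Type u} {a : 𝒯.TCatStr X} {r : X → X → Prop}

/-- `c = q · a · (Tq)°` for the quotient map `q : X → Quot r`. -/
def IsQuotientStr (a : 𝒯.TCatStr X) (qs : 𝒯.TCatStr (Quot r)) : Prop :=
  ∀ (𝔶 : T (Quot r)) (z : Quot r),
    qs.rel 𝔶 z = ⨆ 𝔵 : {𝔵 : T X // 𝒯.map (Quot.mk r) 𝔵 = 𝔶},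
      ⨆ x : {x : X // Quot.mk r x = z}, a.rel 𝔵.1 x.1

lemma isTFunctor_mk {qs : 𝒯.TCatStr (Quot r)} (hqs : IsQuotientStr a qs) :
    IsTFunctor a qs (Quot.mk r) := fun 𝔵 x => by
  rw [hqs]
  exact le_iSup_of_le ⟨𝔵, rfl⟩ (le_iSup_of_le ⟨x, rfl⟩ le_rfl)

lemma rel_le_rel_of_map_mk_eq (hr : Equivalence r) {σ : X → X}
    (hσ : ∀ (𝔯 : T {p : X × X // r p.1 p.2}) (x : X),
      a.rel (𝒯.map (fun p => p.1.1) 𝔯) x ≤ a.rel (𝒯.map (fun p => p.1.2) 𝔯) (σ x))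
    {𝔷 𝔷' : T X} (h : 𝒯.map (Quot.mk r) 𝔷' = 𝒯.map (Quot.mk r) 𝔷) (x : X) :
    a.rel 𝔷' x ≤ a.rel 𝔷 (σ x) := by
  obtain ⟨𝔳, h₁, h₂⟩ := 𝒯.map_bc (Quot.mk r) (Quot.mk r) 𝔷' 𝔷 h
  let i : {p : X × X // Quot.mk r p.1 = Quot.mk r p.2} → {p : X × X // r p.1 p.2} :=
    fun p => ⟨p.1, hr.eqvGen_iff.mp (Quot.eq.mp p.2)⟩
  have e₁ : 𝒯.map (fun p => p.1.1) (𝒯.map i 𝔳) = 𝔷' := (𝒯.map_comp _ _ _).symm.trans h₁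
  have e₂ : 𝒯.map (fun p => p.1.2) (𝒯.map i 𝔳) = 𝔷 := (𝒯.map_comp _ _ _).symm.trans h₂
  simpa only [e₁, e₂] using hσ (𝒯.map i 𝔳) x

lemma rel_map_mk_le_iSup (hr : Equivalence r) {qs : 𝒯.TCatStr (Quot r)}
    (hqs : IsQuotientStr a qs) {σ : X → X} (hσr : ∀ x, r x (σ x))
    (hσ : ∀ (𝔯 : T {p : X × X // r p.1 p.2}) (x : X),
      a.rel (𝒯.map (fun p => p.1.1) 𝔯) x ≤ a.rel (𝒯.map (fun p => p.1.2) 𝔯) (σ x))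
    (𝔷 : T X) (z : X) :
    qs.rel (𝒯.map (Quot.mk r) 𝔷) (Quot.mk r z) ≤
      ⨆ w : {w : {p : X × X // r p.1 p.2} // w.1.1 = z}, a.rel 𝔷 w.1.1.2 := by
  rw [hqs]
  refine iSup₂_le fun 𝔷' x => ?_
  have hz : r z (σ x) := hr.trans (hr.eqvGen_iff.mp (Quot.eq.mp x.2.symm)) (hσr x)
  exact (rel_le_rel_of_map_mk_eq hr hσ 𝔷'.2 x.1).trans
    (le_iSup_of_le ⟨⟨(z, σ x), hz⟩, rfl⟩ le_rfl)

lemma hatMapRel_map_mk_le (hr : Equivalence r) {qs : 𝒯.TCatStr (Quot r)}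
    (hqs : IsQuotientStr a qs) {σ : X → X} (hσr : ∀ x, r x (σ x))
    (hσ : ∀ (𝔯 : T {p : X × X // r p.1 p.2}) (x : X),
      a.rel (𝒯.map (fun p => p.1.1) 𝔯) x ≤ a.rel (𝒯.map (fun p => p.1.2) 𝔯) (σ x))
    (ψ : T X → V) (𝔵 : T X) :
    hatMapRel qs (Quot.mk r) ψ (𝒯.map (Quot.mk r) 𝔵) ≤
      hatMapRel a (fun p : {p : X × X // r p.1 p.2} => p.1.2)
        (fun 𝔴 => ψ (𝒯.map (fun p => p.1.1) 𝔴)) 𝔵 := by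
  refine 𝒯.kleisli_le _ _ fun 𝔜 𝔵' => ?_
  obtain ⟨𝔛, h𝔜, h𝔛⟩ := 𝒯.m_bc (Quot.mk r) 𝔜.1 𝔵 𝔜.2
  have hTxi : 𝒯.Txi (modCostar qs (Quot.mk r)) 𝔜.1 𝔵' ≤
      ⨆ 𝔴 : {𝔴 // 𝒯.map (fun p : {p : X × X // r p.1 p.2} => p.1.1) 𝔴 = 𝔵'},
        𝒯.Txi (modCostar a (fun p : {p : X × X // r p.1 p.2} => p.1.2)) 𝔛 𝔴.1 :=
    calc 𝒯.Txi (modCostar qs (Quot.mk r)) 𝔜.1 𝔵'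
        ≤ 𝒯.Txi (fun 𝔷 z => qs.rel (𝒯.map (Quot.mk r) 𝔷) (Quot.mk r z)) 𝔛 𝔵' := by
          rw [← h𝔜]
          exact 𝒯.Txi_map_le_Txi_comp _ _ _ _
      _ ≤ 𝒯.Txi (fun 𝔷 z => ⨆ w : {w : {p : X × X // r p.1 p.2} // w.1.1 = z},
            a.rel 𝔷 w.1.1.2) 𝔛 𝔵' :=
          𝒯.Txi_mono (rel_map_mk_le_iSup hr hqs hσr hσ) _ _
      _ ≤ _ := 𝒯.Txi_iSup_fiber_le (modCostar a fun p : {p : X × X // r p.1 p.2} => p.1.2)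
          (fun p => p.1.1) 𝔛 𝔵'
  calc 𝒯.tens (𝒯.Txi (modCostar qs (Quot.mk r)) 𝔜.1 𝔵') (ψ 𝔵')
      ≤ ⨆ 𝔴 : {𝔴 // 𝒯.map (fun p : {p : X × X // r p.1 p.2} => p.1.1) 𝔴 = 𝔵'},
          𝒯.tens (𝒯.Txi (modCostar a (fun p : {p : X × X // r p.1 p.2} => p.1.2)) 𝔛 𝔴.1)
            (ψ (𝒯.map (fun p => p.1.1) 𝔴.1)) := by
        refine (𝒯.tens_le_tens hTxi le_rfl).trans_eq ?_
        rw [𝒯.iSup_tens]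
        exact iSup_congr fun 𝔴 => by rw [𝔴.2]
    _ ≤ _ := iSup_le fun 𝔴 => 𝒯.le_kleisli
        (fun 𝔴 (_ : PUnit.{u + 1}) => ψ (𝒯.map (fun p : {p : X × X // r p.1 p.2} => p.1.1) 𝔴))
        _ _ h𝔛 _

end Quotient

theorem statement18_general (𝒯 : TopTheory V T) {X : Type u} (a : 𝒯.TCatStr X)
    (r : X → X → Prop) (hr : Equivalence r)
    (rs : 𝒯.TCatStr {p : X × X // r p.1 p.2})
    (hXsep : Separated a)
    (hπ₁ : IsLeftAdjoint rs a (fun p => p.1.1))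
    (hπ₂ : IsLeftAdjoint rs a (fun p => p.1.2))
    (qs : 𝒯.TCatStr (Quot r))
    (hqs : ∀ (𝔶 : T (Quot r)) (z : Quot r),
      qs.rel 𝔶 z = ⨆ 𝔵 : {𝔵 : T X // 𝒯.map (Quot.mk r) 𝔵 = 𝔶},
        ⨆ x : {x : X // Quot.mk r x = z}, a.rel 𝔵.1 x.1)
    (p1h p2h : Hat rs → Hat a)
    (hp1h : IsHatMap rs a (fun p => p.1.1) p1h)
    (hp2h : IsHatMap rs a (fun p => p.1.2) p2h)
    (qh : Hat a → Hat qs) (hqh : IsHatMap a qs (Quot.mk r) qh)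
    (qinv : Hat qs → Hat a)
    (hqinv : ∀ (Ψ : Hat qs) (𝔵 : T X), (qinv Ψ).1 𝔵 = Ψ.1 (𝒯.map (Quot.mk r) 𝔵))
    (p1inv : Hat a → Hat rs)
    (hp1inv : ∀ (Ψ : Hat a) (𝔴 : T {p : X × X // r p.1 p.2}),
      (p1inv Ψ).1 𝔴 = Ψ.1 (𝒯.map (fun q => q.1.1) 𝔴)) :
    (∀ Ψ : Hat qs, qh (qinv Ψ) = Ψ) ∧
    (∀ Ψ : Hat a, p1h (p1inv Ψ) = Ψ) ∧
    (∀ Ψ : Hat a, qinv (qh Ψ) = p2h (p1inv Ψ)) := by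
  obtain ⟨hπ₁f, g₁, hg₁, hadj⟩ := hπ₁
  have hdiag : Function.RightInverse (fun x => (⟨(x, x), hr.refl x⟩ : {p : X × X // r p.1 p.2}))
      (fun p => p.1.1) := fun _ => rfl
  have hπ₁g₁ : Function.LeftInverse (fun p => p.1.1) g₁ := hadj.leftInverse hπ₁f hg₁ hXsep hdiag
  have hσr (x : X) : r x (g₁ x).1.2 := by
    have hx : (g₁ x).1.1 = x := hπ₁g₁ x
    simpa only [hx] using (g₁ x).2
  have hσ := hadj.rel_map_le_rel_map hg₁ hπ₂.1
  refine ⟨fun Ψ => ?_, fun Ψ => ?_, fun Ψ => ?_⟩ <;> refine Subtype.ext (funext fun 𝔵 => ?_)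
  · rw [hqh, funext (hqinv Ψ)]
    exact hatMapRel_comap_of_rightInverse qs Quot.out_eq Ψ.2 𝔵
  · rw [hp1h, funext (hp1inv Ψ)]
    exact hatMapRel_comap_of_rightInverse a hdiag Ψ.2 𝔵
  · rw [hqinv, hqh, hp2h, funext (hp1inv Ψ)]
    exact le_antisymm (hatMapRel_map_mk_le hr hqs hσr hσ _ _)
      (hatMapRel_comap_le_hatMapRel_map (isTFunctor_mk hqs) (fun w => Quot.sound w.2) _ _)

/-- split fork, Subsection 4.2. Let `π₁, π₂ : R ⇉ X` be the
projections of an equivalence relation `R ⊆ X × X`, where `R` (with the `𝒯`-structure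
inherited from `X ⊗ X`) and `X` are L-separated cocomplete `𝒯`-categories and
`π₁, π₂` are left adjoint, and let `q : X → Q` be the quotient in `Set` with the
`𝒯`-structure `c = q·a·Tq°`. Then `π̂₁, π̂₂ : R̂ ⇉ X̂`, `q̂ : X̂ → Q̂` is a split fork,
split by `q⁻¹` and `π₁⁻¹`: `q̂·q⁻¹ = 1`, `π̂₁·π₁⁻¹ = 1` and `q⁻¹·q̂ = π̂₂·π₁⁻¹`. -/
theorem statement18 (𝒯 : TopTheory V T) {X : Type u} (a : 𝒯.TCatStr X)
    (r : X → X → Prop) (hr : Equivalence r)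
    (rs : 𝒯.TCatStr {p : X × X // r p.1 p.2})
    (hrs : ∀ (𝔴 : T {p : X × X // r p.1 p.2}) (p : {p : X × X // r p.1 p.2}),
      rs.rel 𝔴 p = 𝒯.tens (a.rel (𝒯.map (fun q => q.1.1) 𝔴) p.1.1)
        (a.rel (𝒯.map (fun q => q.1.2) 𝔴) p.1.2))
    (hXsep : Separated a) (hXcoc : Cocomplete a)
    (hRsep : Separated rs) (hRcoc : Cocomplete rs)
    (hπ₁ : IsLeftAdjoint rs a (fun p => p.1.1))
    (hπ₂ : IsLeftAdjoint rs a (fun p => p.1.2))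
    (qs : 𝒯.TCatStr (Quot r))
    (hqs : ∀ (𝔶 : T (Quot r)) (z : Quot r),
      qs.rel 𝔶 z = ⨆ 𝔵 : {𝔵 : T X // 𝒯.map (Quot.mk r) 𝔵 = 𝔶},
        ⨆ x : {x : X // Quot.mk r x = z}, a.rel 𝔵.1 x.1)
    (hsR : 𝒯.TCatStr (Hat rs)) (hhsR : IsHatStr rs hsR)
    (hsX : 𝒯.TCatStr (Hat a)) (hhsX : IsHatStr a hsX)
    (hsQ : 𝒯.TCatStr (Hat qs)) (hhsQ : IsHatStr qs hsQ)
    (p1h p2h : Hat rs → Hat a)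
    (hp1h : IsHatMap rs a (fun p => p.1.1) p1h)
    (hp2h : IsHatMap rs a (fun p => p.1.2) p2h)
    (qh : Hat a → Hat qs) (hqh : IsHatMap a qs (Quot.mk r) qh)
    (qinv : Hat qs → Hat a)
    (hqinv : ∀ (Ψ : Hat qs) (𝔵 : T X), (qinv Ψ).1 𝔵 = Ψ.1 (𝒯.map (Quot.mk r) 𝔵))
    (p1inv : Hat a → Hat rs)
    (hp1inv : ∀ (Ψ : Hat a) (𝔴 : T {p : X × X // r p.1 p.2}),
      (p1inv Ψ).1 𝔴 = Ψ.1 (𝒯.map (fun q => q.1.1) 𝔴)) :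
    (∀ Ψ : Hat qs, qh (qinv Ψ) = Ψ) ∧
    (∀ Ψ : Hat a, p1h (p1inv Ψ) = Ψ) ∧
    (∀ Ψ : Hat a, qinv (qh Ψ) = p2h (p1inv Ψ)) :=
  statement18_general 𝒯 a r hr rs hXsep hπ₁ hπ₂ qs hqs p1h p2h hp1h hp2h qh hqh qinv hqinv p1inv
    hp1inv

end TopTheory

end Paper
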